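/- arXiv:1605.05189 — 5 statements merged into one kernel-verified Lean document; each statement's English description precedes it below -/
import Mathlib

section
/- Let A be a *-ring and let s, t ∈ A satisfy s s* s = s and t t* t = t (s and t are partial isometries). Suppose s*t and st* are self-adjoint idempotents, and suppose the six idempotents s s*, s* s, t t*, t* t, s* t, s t* commute pairwise. Then the element a := s + t − s s* t satisfies: (i) a a* a = a (a is a partial isometry); (ii) a* a = s* s + t* t − (s* s)(t* t); (iii) a a* = s s* + t t* − (s s*)(t t*); (iv) a (s* s) = s and a (t* t) = t (so a is an upper bound of s and t in the partial-isometry order). -/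
set_option maxHeartbeats 1600000 in
/-- In a *-ring, if `s` and `t` are partial isometries such that `s* t` and
`s t*` are self-adjoint idempotents and the six idempotents
`s s*, s* s, t t*, t* t, s* t, s t*` pairwise commute, then
`a = s + t - s s* t` is a partial isometry which is the join of `s` and `t`:
`a* a = s* s + t* t - (s* s)(t* t)`, `a a* = s s* + t t* - (s s*)(t t*)`,
`a (s* s) = s` and `a (t* t) = t`. -/
theorem stmt2 {A : Type*} [Ring A] [StarRing A] (s t : A)
    (hs : s * star s * s = s) (ht : t * star t * t = t)
    (hst_sa : star (star s * t) = star s * t)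
    (hst_idem : (star s * t) * (star s * t) = star s * t)
    (hts_sa : star (s * star t) = s * star t)
    (hts_idem : (s * star t) * (s * star t) = s * star t)
    (hcomm : ∀ x ∈ [s * star s, star s * s, t * star t, star t * t,
        star s * t, s * star t],
      ∀ y ∈ [s * star s, star s * s, t * star t, star t * t,
        star s * t, s * star t], x * y = y * x) :
    (s + t - s * star s * t) * star (s + t - s * star s * t) *
        (s + t - s * star s * t) = s + t - s * star s * t ∧
    star (s + t - s * star s * t) * (s + t - s * star s * t) =
        star s * s + star t * t - (star s * s) * (star t * t) ∧
    (s + t - s * star s * t) * star (s + t - s * star s * t) =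
        s * star s + t * star t - (s * star s) * (t * star t) ∧
    (s + t - s * star s * t) * (star s * s) = s ∧
    (s + t - s * star s * t) * (star t * t) = t := by
  -- basic binary rules
  have b1 : s * (star s * s) = s := by rw [← mul_assoc]; exact hs
  have b2 : star s * (s * star s) = star s := by
    simpa [star_mul, star_star, mul_assoc] using congrArg star hs
  have b3 : t * (star t * t) = t := by rw [← mul_assoc]; exact ht
  have b4 : star t * (t * star t) = star t := by
    simpa [star_mul, star_star, mul_assoc] using congrArg star ht
  have b5 : star t * s = star s * t := by
    simpa [star_mul, star_star] using hst_sa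
  have b6 : t * star s = s * star t := by
    simpa [star_mul, star_star] using hts_sa
  -- parametrized versions
  have p1 : ∀ x : A, s * (star s * (s * x)) = s * x := fun x => by
    have := congrArg (· * x) b1; simpa [mul_assoc] using this
  have p2 : ∀ x : A, star s * (s * (star s * x)) = star s * x := fun x => by
    have := congrArg (· * x) b2; simpa [mul_assoc] using this
  have p3 : ∀ x : A, t * (star t * (t * x)) = t * x := fun x => by
    have := congrArg (· * x) b3; simpa [mul_assoc] using this
  have p4 : ∀ x : A, star t * (t * (star t * x)) = star t * x := fun x => by
    have := congrArg (· * x) b4; simpa [mul_assoc] using this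
  have p5 : ∀ x : A, star t * (s * x) = star s * (t * x) := fun x => by
    rw [← mul_assoc, b5, mul_assoc]
  have p6 : ∀ x : A, t * (star s * x) = s * (star t * x) := fun x => by
    rw [← mul_assoc, b6, mul_assoc]
  -- commutation instances
  have c_qw : (star s * s) * (star t * t) = (star t * t) * (star s * s) :=
    hcomm _ (by simp) _ (by simp)
  have c_qe : (star s * s) * (star s * t) = (star s * t) * (star s * s) :=
    hcomm _ (by simp) _ (by simp)
  have c_pr : (s * star s) * (t * star t) = (t * star t) * (s * star s) :=
    hcomm _ (by simp) _ (by simp)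
  -- self-adjoint idempotent facts
  have hEE : star t * (s * (star s * t)) = star s * t := by
    rw [← mul_assoc, b5, hst_idem]
  have hFF : t * (star s * (s * star t)) = s * star t := by
    rw [← mul_assoc, b6, hts_idem]
  have hqe : (star s * t) * (star s * s) = star s * t := by
    rw [← c_qe, mul_assoc, p2]
  have hft : (s * star t) * t = t * (star s * s) := by
    calc (s * star t) * t = (t * (star s * (s * star t))) * t := by rw [hFF]
      _ = t * ((star s * s) * (star t * t)) := by simp only [mul_assoc]
      _ = t * ((star t * t) * (star s * s)) := by rw [c_qw]
      _ = t * (star s * s) := by rw [← mul_assoc, b3]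
  have hqw : star s * (s * (star t * t)) = star s * t := by
    rw [← mul_assoc s, hft, ← mul_assoc, hqe]
  have pqw : ∀ x : A, star s * (s * (star t * (t * x))) = star s * (t * x) := fun x => by
    have := congrArg (· * x) hqw; simpa [mul_assoc] using this
  have hpr : s * (star s * (t * star t)) = s * star t := by
    calc s * (star s * (t * star t))
        = s * ((star s * t) * star t) := by rw [← mul_assoc (star s)]
      _ = s * ((star t * s) * star t) := by rw [← b5]
      _ = s * (star t * (s * star t)) := by rw [mul_assoc]
      _ = s * (star t * (t * star s)) := by rw [← b6]
      _ = (s * (star t * t)) * star s := by simp only [mul_assoc]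
      _ = ((s * star t) * t) * star s := by rw [← mul_assoc s]
      _ = (t * (star s * s)) * star s := by rw [hft]
      _ = t * (star s * (s * star s)) := by simp only [mul_assoc]
      _ = t * star s := by rw [b2]
      _ = s * star t := b6
  have ppr : ∀ x : A, s * (star s * (t * (star t * x))) = s * (star t * x) := fun x => by
    have := congrArg (· * x) hpr; simpa [mul_assoc] using this
  have htE : t * (star s * t) = s * (star s * t) := by
    calc t * (star s * t) = t * (star t * (s * (star s * t))) := by rw [hEE]
      _ = ((t * star t) * (s * star s)) * t := by simp only [mul_assoc]
      _ = ((s * star s) * (t * star t)) * t := by rw [← c_pr]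
      _ = (s * star s) * ((t * star t) * t) := by rw [mul_assoc]
      _ = (s * star s) * t := by rw [mul_assoc t, b3]
      _ = s * (star s * t) := mul_assoc _ _ _
  have hstt : s * (star t * t) = s * (star s * t) := by
    calc s * (star t * t) = (t * star s) * t := by rw [← mul_assoc, ← b6]
      _ = t * (star s * t) := mul_assoc _ _ _
      _ = s * (star s * t) := htE
  have hTQ : t * (star s * s) = s * (star s * t) := by
    calc t * (star s * s) = (t * (star t * t)) * (star s * s) := by rw [b3]
      _ = t * ((star t * t) * (star s * s)) := by rw [mul_assoc]
      _ = t * ((star s * s) * (star t * t)) := by rw [← c_qw]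
      _ = t * (star s * (s * (star t * t))) := by rw [mul_assoc (star s)]
      _ = t * (star s * t) := by rw [hqw]
      _ = s * (star s * t) := htE
  have hsts : s * (star t * s) = s * (star s * t) := by
    calc s * (star t * s) = (t * star s) * s := by rw [← mul_assoc, ← b6]
      _ = t * (star s * s) := mul_assoc _ _ _
      _ = s * (star s * t) := hTQ
  have pstt : ∀ x : A, s * (star t * (t * x)) = s * (star s * (t * x)) := fun x => by
    have := congrArg (· * x) hstt; simpa [mul_assoc] using this
  have psts : ∀ x : A, s * (star t * (s * x)) = s * (star s * (t * x)) := fun x => by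
    have := congrArg (· * x) hsts; simpa [mul_assoc] using this
  -- star side
  have hws : star t * (t * star s) = star s * (s * star t) := by
    have h := congrArg star hstt
    simp only [star_mul, star_star, mul_assoc] at h
    rw [h, p5, b6]
  have hsts' : star s * (t * star s) = star s * (s * star t) := by
    have h := congrArg star hsts
    simp only [star_mul, star_star, mul_assoc] at h
    rw [h, p5, b6]
  have hsw : star s * (t * star t) = star s * (s * star t) := by
    calc star s * (t * star t) = (star t * s) * star t := by rw [← mul_assoc, ← b5]
      _ = star t * (s * star t) := mul_assoc _ _ _
      _ = star t * (t * star s) := by rw [← b6]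
      _ = star s * (s * star t) := hws
  have pws : ∀ x : A, star t * (t * (star s * x)) = star s * (s * (star t * x)) := fun x => by
    have := congrArg (· * x) hws; simpa [mul_assoc] using this
  have psts' : ∀ x : A, star s * (t * (star s * x)) = star s * (s * (star t * x)) := fun x => by
    have := congrArg (· * x) hsts'; simpa [mul_assoc] using this
  have psw : ∀ x : A, star s * (t * (star t * x)) = star s * (s * (star t * x)) := fun x => by
    have := congrArg (· * x) hsw; simpa [mul_assoc] using this
  have h3 : (s + t - s * star s * t) * star (s + t - s * star s * t) =
      s * star s + t * star t - (s * star s) * (t * star t) := by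
    simp only [star_add, star_sub, star_mul, star_star, mul_add, add_mul, mul_sub, sub_mul,
      mul_assoc]
    simp only [b1, b2, b3, b4, b5, b6, p1, p2, p3, p4, p5, p6, pqw, hqw, ppr, hpr,
      pstt, hstt, psts, hsts, pws, hws, psts', hsts', psw, hsw]
    abel
  refine ⟨?_, ?_, h3, ?_, ?_⟩
  · rw [h3]
    simp only [mul_add, add_mul, mul_sub, sub_mul, mul_assoc]
    simp only [b1, b2, b3, b4, b5, b6, p1, p2, p3, p4, p5, p6, pqw, hqw, ppr, hpr,
      pstt, hstt, psts, hsts, pws, hws, psts', hsts', psw, hsw]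
    abel
  · simp only [star_add, star_sub, star_mul, star_star, mul_add, add_mul, mul_sub, sub_mul,
      mul_assoc]
    simp only [b1, b2, b3, b4, b5, b6, p1, p2, p3, p4, p5, p6, pqw, hqw, ppr, hpr,
      pstt, hstt, psts, hsts, pws, hws, psts', hsts', psw, hsw]
    abel
  · simp only [mul_add, add_mul, mul_sub, sub_mul, mul_assoc]
    simp only [b1, b2, b3, b4, b5, b6, p1, p2, p3, p4, p5, p6, pqw, hqw, ppr, hpr,
      pstt, hstt, psts, hsts, pws, hws, psts', hsts', psw, hsw]
    abel
  · simp only [mul_add, add_mul, mul_sub, sub_mul, mul_assoc]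
    simp only [b1, b2, b3, b4, b5, b6, p1, p2, p3, p4, p5, p6, pqw, hqw, ppr, hpr,
      pstt, hstt, psts, hsts, pws, hws, psts', hsts', psw, hsw]
    abel
end

section
/- Let S be an inverse semigroup in which all idempotents are self-adjoint and commute. If e ∈ S is an idempotent and s, t ∈ S satisfy (s t) e = e, then (s s*) e = e and e (t* t) = e; that is, every idempotent fixed by st lies below both s s* and t* t in the idempotent order (f ≤ g iff f g = f). -/
/-- In an inverse semigroup with self-adjoint commuting idempotents, any
idempotent `e` fixed by `s t` satisfies `(s s*) e = e` and `e (t* t) = e`,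
i.e. `e` lies below both `s s*` and `t* t` in the idempotent order. -/
theorem stmt4 {S : Type*} [Semigroup S] [Star S]
    (hinv1 : ∀ s : S, s * star s * s = s)
    (hinv2 : ∀ s : S, star s * s * star s = star s)
    (hstar_star : ∀ s : S, star (star s) = s)
    (hstar_mul : ∀ s t : S, star (s * t) = star t * star s)
    (hidem_star : ∀ e : S, e * e = e → star e = e)
    (hidem_comm : ∀ e f : S, e * e = e → f * f = f → e * f = f * e)
    (s t e : S) (he : e * e = e) (hfix : (s * t) * e = e) :
    (s * star s) * e = e ∧ e * (star t * t) = e := by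
  have estar : star e = e := hidem_star e he
  have hfix' : e * (star t * star s) = e := by
    have h := congrArg star hfix
    rw [hstar_mul, hstar_mul, estar] at h
    exact h
  have h1 : (s * star s) * e = e := by
    calc s * star s * e = s * star s * (s * t * e) := by rw [hfix]
      _ = (s * star s * s) * (t * e) := by simp only [mul_assoc]
      _ = s * (t * e) := by rw [hinv1]
      _ = s * t * e := by rw [mul_assoc]
      _ = e := hfix
  set v := star t * star s with hv
  have gidem : (v * e) * (v * e) = v * e := by
    calc v * e * (v * e) = v * (e * v) * e := by simp only [mul_assoc]
      _ = v * e * e := by rw [hfix']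
      _ = v * (e * e) := by rw [mul_assoc]
      _ = v * e := by rw [he]
  have comm := hidem_comm e (v * e) he gidem
  have hge : v * e = e := by
    calc v * e = (v * e) * e := by rw [mul_assoc v e e, he]
      _ = e * (v * e) := comm.symm
      _ = (e * v) * e := (mul_assoc e v e).symm
      _ = e * e := by rw [hfix']
      _ = e := he
  have htt : (star t * t) * (star t * t) = star t * t := by
    calc star t * t * (star t * t) = (star t * t * star t) * t := by simp only [mul_assoc]
      _ = star t * t := by rw [hinv2]
  have comm2 := hidem_comm e (star t * t) he htt
  have h4 : (star t * t) * e = e := by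
    calc (star t * t) * e = (star t * t) * (v * e) := by rw [hge]
      _ = (star t * t * star t) * (star s * e) := by rw [hv]; simp only [mul_assoc]
      _ = star t * (star s * e) := by rw [hinv2]
      _ = (star t * star s) * e := by rw [mul_assoc]
      _ = e := hge
  exact ⟨h1, comm2.trans h4⟩
end

section
/- Let S be an inverse semigroup in which all idempotents are self-adjoint and commute. Let s, t, r ∈ S and let e, f be idempotents with (s* t) e = e and (t* r) f = f. Then (s* r)(e f) = e f; that is, the product of an idempotent fixed by s*t with an idempotent fixed by t*r is fixed by s*r. -/
/-- In an inverse semigroup with self-adjoint commuting idempotents, if the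
idempotent `e` is fixed by `s* t` and the idempotent `f` is fixed by `t* r`,
then the idempotent `e f` is fixed by `s* r`. -/
theorem stmt5 {S : Type*} [Semigroup S] [Star S]
    (hinv1 : ∀ s : S, s * star s * s = s)
    (hinv2 : ∀ s : S, star s * s * star s = star s)
    (hstar_star : ∀ s : S, star (star s) = s)
    (hstar_mul : ∀ s t : S, star (s * t) = star t * star s)
    (hidem_star : ∀ e : S, e * e = e → star e = e)
    (hidem_comm : ∀ e f : S, e * e = e → f * f = f → e * f = f * e)
    (s t r e f : S) (he : e * e = e) (hf : f * f = f)
    (hfixe : (star s * t) * e = e) (hfixf : (star t * r) * f = f) :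
    (star s * r) * (e * f) = e * f := by
  -- contextual versions of the basic hypotheses (right-associated words)
  have c1 : ∀ x : S, star s * (t * (e * x)) = e * x := fun x => by
    rw [← mul_assoc, ← mul_assoc, hfixe]
  have c2 : ∀ x : S, star t * (r * (f * x)) = f * x := fun x => by
    rw [← mul_assoc, ← mul_assoc, hfixf]
  have c3 : ∀ x : S, f * (e * x) = e * (f * x) := fun x => by
    rw [← mul_assoc, ← mul_assoc, hidem_comm f e hf he]
  have ce : ∀ x : S, e * (e * x) = e * x := fun x => by rw [← mul_assoc, he]
  have cf : ∀ x : S, f * (f * x) = f * x := fun x => by rw [← mul_assoc, hf]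
  -- g := e*f is an idempotent
  have Gctx : ∀ x : S, e * (f * (e * (f * x))) = e * (f * x) := fun x => by
    rw [c3, ce, cf]
  have Gidem : (e * f) * (e * f) = e * f := by
    rw [mul_assoc, c3, ce, hf]
  have hstg : star (e * f) = e * f := hidem_star (e * f) Gidem
  -- (iii): (t* r) fixes e*f, contextual form
  have c8 : ∀ x : S, star t * (r * (e * (f * x))) = e * (f * x) := fun x => by
    rw [← c3, c2]
  have iiiP : star t * (r * (e * f)) = e * f := by
    rw [← hidem_comm f e hf he]; exact c2 e
  -- (iv): (e*f) (t* s) = e*f  (star of the fixing relation for s* t)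
  have iv : e * (f * (star t * s)) = e * f := by
    have h := congrArg star (c1 f)
    rw [hstar_mul, hstar_mul, hstar_star, hstg, mul_assoc, mul_assoc] at h
    exact h
  -- (v): (e*f) (r* t) = e*f  (star of iiiP)
  have v : e * (f * (star r * t)) = e * f := by
    have h := congrArg star iiiP
    rw [hstar_mul, hstar_mul, hstar_star, hstg, mul_assoc, mul_assoc] at h
    exact h
  have vL : ((e * f) * star r) * t = e * f := by
    rw [mul_assoc, mul_assoc]; exact v
  have vctx : ∀ x : S, e * (f * (star r * (t * x))) = e * (f * x) := fun x => by
    rw [← mul_assoc, ← mul_assoc, ← mul_assoc, vL, mul_assoc]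
  -- (ix): g = t* k t where k = r g r*, contextual form
  have ixctx : ∀ x : S, star t * (r * (e * (f * (star r * (t * x))))) = e * (f * x) :=
    fun x => by rw [c8, vctx]
  -- k := r*(e*(f*star r)) is a self-adjoint idempotent commuting with t t*
  have hrr : (star r * r) * (star r * r) = star r * r := by
    rw [← mul_assoc, hinv2]
  have hcre := hidem_comm (star r * r) e hrr he
  have hcrf := hidem_comm (star r * r) f hrr hf
  have ci_e : ∀ x : S, star r * (r * (e * x)) = e * (star r * (r * x)) := fun x => by
    rw [← mul_assoc, ← mul_assoc, hcre, mul_assoc, mul_assoc]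
  have ci_f : ∀ x : S, star r * (r * (f * x)) = f * (star r * (r * x)) := fun x => by
    rw [← mul_assoc, ← mul_assoc, hcrf, mul_assoc, mul_assoc]
  have hrr' : star r * (r * star r) = star r := by
    rw [← mul_assoc]; exact hinv2 r
  have hK : (r * (e * (f * star r))) * (r * (e * (f * star r))) = r * (e * (f * star r)) := by
    simp only [mul_assoc]
    rw [ci_e (f * star r), ci_f (star r), hrr', Gctx (star r)]
  have htt : (t * star t) * (t * star t) = t * star t := by
    rw [← mul_assoc, hinv1]
  have hcommKtt := hidem_comm (r * (e * (f * star r))) (t * star t) hK htt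
  have P : ((r * (e * (f * star r))) * (t * star t)) * (r * (e * (f * star r)))
      = (r * (e * (f * star r))) * (t * star t) := by
    rw [mul_assoc, ← hcommKtt, ← mul_assoc, hK]
  have cK : ∀ x : S,
      r * (e * (f * (star r * (t * (star t * (r * (e * (f * (star r * x))))))))) =
      r * (e * (f * (star r * (t * (star t * x))))) := fun x => by
    have h := congrArg (· * x) P
    simp only [mul_assoc] at h
    exact h
  -- the key computation: g (r* s) = g
  have key : e * (f * (star r * s)) = e * f := by
    have W2 : e * (f * (e * (f * (star r * s)))) = e * f := by
      rw [← ixctx (e * (f * (star r * s))), ← c8 (star r * s), cK s, ixctx (star t * s)]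
      exact iv
    rw [← Gctx (star r * s)]
    exact W2
  -- conclusion: s* r (e f) = star (star (…)) = star (g (r* s))⋆ = e f
  have hh : star s * (r * (e * f)) = e * f := by
    have h1 : star (star s * (r * (e * f))) = e * f := by
      rw [hstar_mul, hstar_mul, hstar_star, hstg, mul_assoc, mul_assoc]
      exact key
    calc star s * (r * (e * f)) = star (star (star s * (r * (e * f)))) := (hstar_star _).symm
      _ = star (e * f) := by rw [h1]
      _ = e * f := hstg
  rw [mul_assoc]
  exact hh
end

section
/- Let S be an inverse semigroup with a zero element 0, in which all idempotents are self-adjoint and commute. Fix s, t ∈ S and let J_{st} = {e ∈ S | e² = e and (s t) e = e} and J_{ts} = {e ∈ S | e² = e and (t s) e = e}. Suppose C ⊆ J_{st} is a cover of J_{st}, i.e. for every nonzero f ∈ J_{st} there exists c ∈ C with c f ≠ 0. Then the set s* C s = {s* c s | c ∈ C} is contained in J_{ts} and is a cover of J_{ts}: for every nonzero f ∈ J_{ts} there exists c ∈ C with (s* c s) f ≠ 0. -/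
/-- In an inverse semigroup with zero, with self-adjoint commuting idempotents:
if `C` is a cover of the set `J_{st}` of idempotents fixed by `s t`, then
`s* C s = {s* c s | c ∈ C}` is contained in `J_{ts}` and is a cover of
`J_{ts}`. -/
theorem stmt7 {S : Type*} [Semigroup S] [Star S] [Zero S]
    (hinv1 : ∀ s : S, s * star s * s = s)
    (hinv2 : ∀ s : S, star s * s * star s = star s)
    (hstar_star : ∀ s : S, star (star s) = s)
    (hstar_mul : ∀ s t : S, star (s * t) = star t * star s)
    (hidem_star : ∀ e : S, e * e = e → star e = e)
    (hidem_comm : ∀ e f : S, e * e = e → f * f = f → e * f = f * e)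
    (hzero_left : ∀ s : S, 0 * s = 0) (hzero_right : ∀ s : S, s * 0 = 0)
    (s t : S) (C : Set S)
    (hC : C ⊆ {e : S | e * e = e ∧ (s * t) * e = e})
    (hcover : ∀ f : S, f * f = f → (s * t) * f = f → f ≠ 0 →
      ∃ c ∈ C, c * f ≠ 0) :
    ((fun c => star s * c * s) '' C ⊆ {e : S | e * e = e ∧ (t * s) * e = e}) ∧
    (∀ f : S, f * f = f → (t * s) * f = f → f ≠ 0 →
      ∃ c ∈ C, (star s * c * s) * f ≠ 0) := by
  have hB : ∀ x : S, star s * (s * (star s * x)) = star s * x := fun x => by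
    rw [← mul_assoc, ← mul_assoc, hinv2]
  have hA0 : s * (star s * s) = s := by rw [← mul_assoc, hinv1]
  have hB0 : star s * (s * star s) = star s := by rw [← mul_assoc, hinv2]
  have he : (s * star s) * (s * star s) = s * star s := by
    rw [← mul_assoc, hinv1]
  have hf : (star s * s) * (star s * s) = star s * s := by
    rw [← mul_assoc, hinv2]
  have key : ∀ c : S, c * c = c → (s * t) * c = c →
      (star s * c * s) * (star s * c * s) = star s * c * s ∧
      (t * s) * (star s * c * s) = star s * c * s ∧
      s * star s * c = c := by
    intro c hc1 hc2
    have hc1' : ∀ x : S, c * (c * x) = c * x := fun x => by rw [← mul_assoc, hc1]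
    have hst' : ∀ x : S, s * (t * (c * x)) = c * x := fun x => by
      rw [← mul_assoc, ← mul_assoc, hc2]
    have hst0 : s * (t * c) = c := by rw [← mul_assoc, hc2]
    have hssc : s * star s * c = c := by
      conv_lhs => rw [← hc2]
      rw [← mul_assoc, ← mul_assoc, hinv1, hc2]
    have hssc' : ∀ x : S, s * (star s * (c * x)) = c * x := fun x => by
      rw [← mul_assoc, ← mul_assoc, hssc]
    have hcomm_e : c * (s * star s) = (s * star s) * c :=
      hidem_comm c (s * star s) hc1 he
    have idem : (star s * c * s) * (star s * c * s) = star s * c * s := by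
      calc (star s * c * s) * (star s * c * s)
          = star s * (c * (s * star s)) * (c * s) := by simp only [mul_assoc]
        _ = star s * ((s * star s) * c) * (c * s) := by rw [hcomm_e]
        _ = star s * c * s := by
            simp only [mul_assoc]
            rw [hc1', hB]
    have tcs_idem : (t * c * s) * (t * c * s) = t * c * s := by
      simp only [mul_assoc]
      rw [hst', hc1']
    have heq : star s * c * s = t * c * s := by
      have h1 : star s * c * s = (star s * s) * (t * c * s) := by
        conv_lhs => rw [← hst0]
        simp only [mul_assoc]
      have h2 : (t * c * s) * (star s * s) = t * c * s := by
        simp only [mul_assoc]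
        rw [hA0]
      rw [h1, hidem_comm _ _ hf tcs_idem, h2]
    have fixed : (t * s) * (star s * c * s) = star s * c * s := by
      conv_lhs =>
        simp only [mul_assoc]
        rw [hssc']
      rw [heq]
      simp only [mul_assoc]
    exact ⟨idem, fixed, hssc⟩
  constructor
  · rintro x ⟨c, hcC, rfl⟩
    obtain ⟨hc1, hc2⟩ := hC hcC
    obtain ⟨i, fx, _⟩ := key c hc1 hc2
    exact ⟨i, fx⟩
  · intro f hf1 hf2 hf3
    have hf1' : ∀ x : S, f * (f * x) = f * x := fun x => by rw [← mul_assoc, hf1]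
    have hts0 : t * (s * f) = f := by rw [← mul_assoc, hf2]
    have hts' : ∀ x : S, t * (s * (f * x)) = f * x := fun x => by
      rw [← mul_assoc, ← mul_assoc, hf2]
    have hcomm_f : f * (star s * s) = (star s * s) * f := hidem_comm f _ hf1 hf
    have hBf : ∀ x : S, star s * (s * (f * x)) = f * (star s * (s * x)) := fun x => by
      calc star s * (s * (f * x)) = ((star s * s) * f) * x := by simp only [mul_assoc]
        _ = (f * (star s * s)) * x := by rw [hcomm_f]
        _ = f * (star s * (s * x)) := by simp only [mul_assoc]
    have gidem : (s * f * star s) * (s * f * star s) = s * f * star s := by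
      calc (s * f * star s) * (s * f * star s)
          = s * (f * (star s * (s * (f * star s)))) := by simp only [mul_assoc]
        _ = s * (f * (f * (star s * (s * star s)))) := by rw [hBf]
        _ = s * f * star s := by rw [hf1', hB0]; simp only [mul_assoc]
    have gfix : (s * t) * (s * f * star s) = s * f * star s := by
      calc (s * t) * (s * f * star s) = s * (t * (s * f)) * star s := by
            simp only [mul_assoc]
        _ = s * f * star s := by rw [hts0]
    have gne : s * f * star s ≠ 0 := by
      intro hg
      have h1 : t * (s * f * star s) * s = 0 := by
        rw [hg, hzero_right, hzero_left]
      have h2 : f * (star s * s) = 0 := by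
        rw [← hts' (star s * s)]
        calc t * (s * (f * (star s * s))) = t * (s * f * star s) * s := by
              simp only [mul_assoc]
          _ = 0 := h1
      have h3 : s * f = 0 := by
        have h4 : s * (f * (star s * s)) = 0 := by rw [h2, hzero_right]
        rwa [hcomm_f, ← mul_assoc, hA0] at h4
      exact hf3 (by rw [← hts0, h3, hzero_right])
    obtain ⟨c, hcC, hcg⟩ := hcover (s * f * star s) gidem gfix gne
    refine ⟨c, hcC, fun hzero => hcg ?_⟩
    obtain ⟨hc1, hc2⟩ := hC hcC
    obtain ⟨_, _, hssc⟩ := key c hc1 hc2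
    have h0 : s * ((star s * c * s) * f) * star s = 0 := by
      rw [hzero, hzero_right, hzero_left]
    calc c * (s * f * star s) = (s * star s * c) * (s * f * star s) := by rw [hssc]
      _ = s * ((star s * c * s) * f) * star s := by simp only [mul_assoc]
      _ = 0 := h0
end

section
/- Let B be a Boolean algebra and let J ⊆ B be a nonempty subset that is downward closed (x ∈ J and y ≤ x imply y ∈ J) and closed under finite joins (x, y ∈ J imply x ⊔ y ∈ J). Suppose C and K are finite subsets of J such that every element x ∈ J with x ≠ ⊥ satisfies c ⊓ x ≠ ⊥ for some c ∈ C, and likewise d ⊓ x ≠ ⊥ for some d ∈ K. Then sup C = sup K, and moreover x ≤ sup C for every x ∈ J (so sup C is the greatest element of J). -/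
/-- In a Boolean algebra `B`, let `J` be a nonempty, downward closed subset
closed under finite joins. If `C` and `K` are finite subsets of `J` such that
every nonzero element of `J` meets some element of `C` and some element of `K`
(i.e. `C` and `K` are covers of `J`), then `sup C = sup K`, and `sup C` is the
greatest element of `J`. -/
theorem stmt8 {B : Type*} [BooleanAlgebra B] (J : Set B)
    (hne : J.Nonempty)
    (hdown : ∀ x ∈ J, ∀ y : B, y ≤ x → y ∈ J)
    (hjoin : ∀ x ∈ J, ∀ y ∈ J, x ⊔ y ∈ J)
    (C K : Finset B) (hCJ : ↑C ⊆ J) (hKJ : ↑K ⊆ J)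
    (hCcov : ∀ x ∈ J, x ≠ ⊥ → ∃ c ∈ C, c ⊓ x ≠ ⊥)
    (hKcov : ∀ x ∈ J, x ≠ ⊥ → ∃ d ∈ K, d ⊓ x ≠ ⊥) :
    C.sup id = K.sup id ∧ C.sup id ∈ J ∧ ∀ x ∈ J, x ≤ C.sup id := by
  obtain ⟨a, ha⟩ := hne
  have hbot : (⊥ : B) ∈ J := hdown a ha ⊥ bot_le
  -- any finset contained in J has its sup in J
  classical
  have hsupJ : ∀ S : Finset B, ↑S ⊆ J → S.sup id ∈ J := by
    intro S
    induction S using Finset.induction_on with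
    | empty => intro _; simpa using hbot
    | insert _ _ hx ih =>
      rename_i b S'
      intro hS
      rw [Finset.sup_insert]
      exact hjoin b (hS (by simp)) _ (ih (fun y hy => hS (by simp [hy])))
  -- every x ∈ J is below the sup of a cover
  have hub : ∀ (S : Finset B), (∀ x ∈ J, x ≠ ⊥ → ∃ c ∈ S, c ⊓ x ≠ ⊥) →
      ∀ x ∈ J, x ≤ S.sup id := by
    intro S hcov x hx
    by_contra h
    have hy : x \ S.sup id ∈ J := hdown x hx _ sdiff_le
    have hyne : x \ S.sup id ≠ ⊥ := by
      intro hb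
      exact h (by simpa using (sdiff_eq_bot_iff.mp hb))
    obtain ⟨c, hcS, hc⟩ := hcov _ hy hyne
    apply hc
    have h1 : c ≤ S.sup id := Finset.le_sup (f := id) hcS
    have h2 : x \ S.sup id ≤ (S.sup id)ᶜ := by
      rw [sdiff_eq]; exact inf_le_right
    have : c ⊓ (x \ S.sup id) ≤ S.sup id ⊓ (S.sup id)ᶜ := inf_le_inf h1 h2
    simp only [inf_compl_eq_bot, le_bot_iff] at this
    exact this
  have hCub := hub C hCcov
  have hKub := hub K hKcov
  have hCin := hsupJ C hCJ
  have hKin := hsupJ K hKJ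
  exact ⟨le_antisymm (hKub _ hCin) (hCub _ hKin), hCin, hCub⟩
end
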